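/- For every n ≥ 1, the number of spanning rooted forests of the path graph P_n in which vertex 1 is a root equals F(2n−1). -/

import Mathlib

/-- A spanning rooted forest of a graph `G`: a spanning acyclic subgraph (given by its
edge set) together with a set of roots containing exactly one root in each tree
(connected component). -/
structure RootedForest {V : Type*} (G : SimpleGraph V) where
  edges : Set (Sym2 V)
  roots : Set V
  edges_sub : edges ⊆ G.edgeSet
  acyclic : (SimpleGraph.fromEdgeSet edges).IsAcyclic
  unique_root : ∀ v : V, ∃! r, r ∈ roots ∧ (SimpleGraph.fromEdgeSet edges).Reachable v r

/-!
Record a rooted forest of the path `0 — 1 — ⋯ — m` by the word `v ↦ compare (root v) v` over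
`{lt, eq, gt}`: each vertex is a root or points towards its root. The edge `{i, i+1}` is present
exactly when `i` points right or `i+1` points left, so the word determines the forest, and the words
that arise are those not starting with `lt`, not ending with `gt`, and never reading `gt lt`.
Counting the words that start with `eq` by their last letter, with `a m` those not ending in `gt`
and `b m` all of them, gives `a (m+1) = a m + b m` and `b (m+1) = a m + 2 b m`, the recurrence of
`(F (2m+1), F (2m+2))`.
-/

open SimpleGraph

namespace RootedForest

variable {V : Type*} {G : SimpleGraph V}

theorem ext {F₁ F₂ : RootedForest G} (hE : F₁.edges = F₂.edges) (hR : F₁.roots = F₂.roots) :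
    F₁ = F₂ := by
  cases F₁; cases F₂; cases hE; cases hR; rfl

variable (F : RootedForest G)

noncomputable def root (v : V) : V := (F.unique_root v).exists.choose

theorem root_mem_roots (v : V) : F.root v ∈ F.roots := (F.unique_root v).exists.choose_spec.1

theorem reachable_root (v : V) : (fromEdgeSet F.edges).Reachable v (F.root v) :=
  (F.unique_root v).exists.choose_spec.2

variable {F}

theorem eq_root {v r : V} (hr : r ∈ F.roots) (hvr : (fromEdgeSet F.edges).Reachable v r) :
    r = F.root v :=
  (F.unique_root v).unique ⟨hr, hvr⟩ ⟨F.root_mem_roots v, F.reachable_root v⟩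

theorem root_eq_of_reachable {u v : V} (h : (fromEdgeSet F.edges).Reachable u v) :
    F.root u = F.root v :=
  (eq_root (F.root_mem_roots v) (h.trans (F.reachable_root v))).symm

theorem root_eq_self_iff {v : V} : F.root v = v ↔ v ∈ F.roots :=
  ⟨fun h => h ▸ F.root_mem_roots v, fun h => (eq_root h .rfl).symm⟩

noncomputable def dir [LinearOrder V] (F : RootedForest G) (v : V) : Ordering :=
  compare (F.root v) v

theorem dir_eq_eq_iff [LinearOrder V] {v : V} : F.dir v = .eq ↔ v ∈ F.roots :=
  compare_eq_iff_eq.trans root_eq_self_iff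

end RootedForest

theorem natCard_subtype_eq_sum_snoc {α : Type*} [Fintype α] {m : ℕ}
    (P : (Fin (m + 1) → α) → Prop) :
    Nat.card {w // P w} = ∑ x, Nat.card {v : Fin m → α // P (Fin.snoc v x)} := by
  rw [← Nat.card_sigma]
  refine Nat.card_congr (((Fin.snocEquiv fun _ => α).symm.subtypeEquiv fun w => ?_).trans
    (Equiv.subtypeProdEquivSigmaSubtype fun x v => P (Fin.snoc v x)))
  simp [Fin.snoc_init_self]

theorem sum_ordering {M : Type*} [AddCommMonoid M] (f : Ordering → M) :
    ∑ x, f x = f .lt + f .eq + f .gt := by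
  simp [Finset.univ, Fintype.elems, add_assoc]

namespace PathGraph

variable {m : ℕ}

def edge (i : Fin m) : Sym2 (Fin (m + 1)) := s(i.castSucc, i.succ)

theorem edge_injective : Function.Injective (edge (m := m)) := by
  intro i j h
  simp only [edge, Sym2.eq_iff, Fin.ext_iff, Fin.val_castSucc, Fin.val_succ] at h
  exact Fin.ext (by omega)

theorem edge_mem_edgeSet (i : Fin m) : edge i ∈ (pathGraph (m + 1)).edgeSet := by
  simp [edge, pathGraph_adj]

theorem exists_edge_eq_of_adj {u v : Fin (m + 1)} (h : (pathGraph (m + 1)).Adj u v) :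
    ∃ i, edge i = s(u, v) := by
  rcases pathGraph_adj.mp h with h | h
  · exact ⟨⟨u, by omega⟩, by simp [edge, h]⟩
  · exact ⟨⟨v, by omega⟩, by simp [edge, h]⟩

theorem exists_edge_eq {e : Sym2 (Fin (m + 1))} (he : e ∈ (pathGraph (m + 1)).edgeSet) :
    ∃ i, edge i = e := by
  induction e using Sym2.ind with
  | h u v => exact exists_edge_eq_of_adj he

variable {S : Set (Sym2 (Fin (m + 1)))}

theorem adj_of_edge_mem {i : Fin m} (h : edge i ∈ S) : (fromEdgeSet S).Adj i.castSucc i.succ :=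
  ⟨h, Fin.castSucc_lt_succ.ne⟩

theorem edge_mem_of_reachable (hS : S ⊆ (pathGraph (m + 1)).edgeSet) {u v : Fin (m + 1)}
    {i : Fin m} (h : (fromEdgeSet S).Reachable u v) (hu : u ≤ i.castSucc) (hv : i.succ ≤ v) :
    edge i ∈ S := by
  obtain ⟨p⟩ := h
  obtain ⟨d, -, hd₁, hd₂⟩ := p.exists_boundary_dart {x | x ≤ i.castSucc} hu
    (not_le.mpr (Fin.castSucc_lt_succ.trans_le hv))
  obtain ⟨hdS, -⟩ := d.adj
  obtain ⟨j, hj⟩ := exists_edge_eq_of_adj (hS hdS)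
  suffices j = i from this ▸ hj ▸ hdS
  simp only [edge, Sym2.eq_iff, Fin.ext_iff, Fin.val_castSucc, Fin.val_succ] at hj
  simp only [Set.mem_ofPred_eq, not_le, Fin.le_def, Fin.val_castSucc] at hd₁ hd₂
  exact Fin.ext (by omega)

theorem isAcyclic_fromEdgeSet (hS : S ⊆ (pathGraph (m + 1)).edgeSet) :
    (fromEdgeSet S).IsAcyclic := by
  refine isAcyclic_iff_forall_adj_isBridge.mpr fun u v huv => ?_
  obtain ⟨i, hi⟩ := exists_edge_eq (hS huv.1)
  rw [← hi, edge, isBridge_iff, deleteEdges_fromEdgeSet]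
  exact fun h => (edge_mem_of_reachable (Set.sdiff_subset.trans hS) h le_rfl le_rfl).2 rfl

def NoFacingPair (w : Fin (m + 1) → Ordering) : Prop :=
  ∀ i : Fin m, ¬(w i.castSucc = .gt ∧ w i.succ = .lt)

def IsDirectionWord (w : Fin (m + 1) → Ordering) : Prop :=
  w 0 ≠ .lt ∧ NoFacingPair w ∧ w (Fin.last m) ≠ .gt

section Forest

variable (F : RootedForest (pathGraph (m + 1)))

theorem edge_mem_edges_iff {i : Fin m} :
    edge i ∈ F.edges ↔ F.dir i.castSucc = .gt ∨ F.dir i.succ = .lt := by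
  simp only [RootedForest.dir, compare_gt_iff_gt, compare_lt_iff_lt]
  constructor
  · intro h
    rw [F.root_eq_of_reachable (adj_of_edge_mem h).reachable]
    rcases lt_or_ge i.castSucc (F.root i.succ) with hlt | hle
    · exact .inl hlt
    · exact .inr (hle.trans_lt Fin.castSucc_lt_succ)
  · rintro (h | h)
    · exact edge_mem_of_reachable F.edges_sub (F.reachable_root _) le_rfl
        (Fin.castSucc_lt_iff_succ_le.mp h)
    · exact edge_mem_of_reachable F.edges_sub (F.reachable_root _).symm
        (Fin.le_castSucc_iff.mpr h) le_rfl

theorem isDirectionWord_dir : IsDirectionWord F.dir := by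
  refine ⟨?_, fun i ⟨hgt, hlt⟩ => ?_, ?_⟩
  · simp [RootedForest.dir, compare_lt_iff_lt]
  · have hroot := F.root_eq_of_reachable
      (adj_of_edge_mem ((edge_mem_edges_iff F).mpr (.inl hgt))).reachable
    rw [RootedForest.dir, compare_gt_iff_gt, hroot, Fin.castSucc_lt_iff_succ_le] at hgt
    rw [RootedForest.dir, compare_lt_iff_lt] at hlt
    exact hgt.not_gt hlt
  · simp [RootedForest.dir, compare_gt_iff_gt, Fin.le_last]

def edgesOfDir (w : Fin (m + 1) → Ordering) : Set (Sym2 (Fin (m + 1))) :=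
  edge '' {i | w i.castSucc = .gt ∨ w i.succ = .lt}

theorem edge_mem_edgesOfDir {w : Fin (m + 1) → Ordering} {i : Fin m} :
    edge i ∈ edgesOfDir w ↔ w i.castSucc = .gt ∨ w i.succ = .lt :=
  edge_injective.mem_set_image

theorem edgesOfDir_subset (w : Fin (m + 1) → Ordering) :
    edgesOfDir w ⊆ (pathGraph (m + 1)).edgeSet := by
  rintro _ ⟨i, -, rfl⟩
  exact edge_mem_edgeSet i

theorem edges_eq_edgesOfDir : F.edges = edgesOfDir F.dir := by
  ext e
  constructor
  · intro he
    obtain ⟨i, rfl⟩ := exists_edge_eq (F.edges_sub he)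
    exact edge_mem_edgesOfDir.mpr ((edge_mem_edges_iff F).mp he)
  · rintro ⟨i, hi, rfl⟩
    exact (edge_mem_edges_iff F).mpr hi

end Forest

section Word

variable {w : Fin (m + 1) → Ordering}

theorem exists_root_right (hw : NoFacingPair w) (hlast : w (Fin.last m) ≠ .gt)
    (v : Fin (m + 1)) (hv : w v = .gt) :
    ∃ r, v < r ∧ w r = .eq ∧ (fromEdgeSet (edgesOfDir w)).Reachable v r := by
  induction v using Fin.reverseInduction with
  | last => exact absurd hv hlast
  | cast i ih =>
    have hadj := adj_of_edge_mem (edge_mem_edgesOfDir.mpr (.inl hv))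
    cases hnext : w i.succ with
    | lt => exact absurd ⟨hv, hnext⟩ (hw i)
    | eq => exact ⟨i.succ, Fin.castSucc_lt_succ, hnext, hadj.reachable⟩
    | gt =>
      obtain ⟨r, hr, hwr, hreach⟩ := ih hnext
      exact ⟨r, Fin.castSucc_lt_succ.trans hr, hwr, hadj.reachable.trans hreach⟩

theorem exists_root_left (hw : NoFacingPair w) (hzero : w 0 ≠ .lt)
    (v : Fin (m + 1)) (hv : w v = .lt) :
    ∃ r, r < v ∧ w r = .eq ∧ (fromEdgeSet (edgesOfDir w)).Reachable v r := by
  induction v using Fin.induction with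
  | zero => exact absurd hv hzero
  | succ i ih =>
    have hadj := adj_of_edge_mem (edge_mem_edgesOfDir.mpr (.inr hv))
    cases hprev : w i.castSucc with
    | gt => exact absurd ⟨hprev, hv⟩ (hw i)
    | eq => exact ⟨i.castSucc, Fin.castSucc_lt_succ, hprev, hadj.symm.reachable⟩
    | lt =>
      obtain ⟨r, hr, hwr, hreach⟩ := ih hprev
      exact ⟨r, hr.trans Fin.castSucc_lt_succ, hwr, hadj.symm.reachable.trans hreach⟩

theorem exists_root (hw : IsDirectionWord w) (v : Fin (m + 1)) :
    ∃ r, w r = .eq ∧ (fromEdgeSet (edgesOfDir w)).Reachable v r ∧ compare r v = w v := by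
  cases hv : w v with
  | lt =>
    obtain ⟨r, hr, hwr, hreach⟩ := exists_root_left hw.2.1 hw.1 v hv
    exact ⟨r, hwr, hreach, compare_lt_iff_lt.mpr hr⟩
  | eq => exact ⟨v, hv, .rfl, compare_eq_iff_eq.mpr rfl⟩
  | gt =>
    obtain ⟨r, hr, hwr, hreach⟩ := exists_root_right hw.2.1 hw.2.2 v hv
    exact ⟨r, hwr, hreach, compare_gt_iff_gt.mpr hr⟩

theorem eq_of_reachable {r₁ r₂ : Fin (m + 1)} (h₁ : w r₁ = .eq) (h₂ : w r₂ = .eq)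
    (h : (fromEdgeSet (edgesOfDir w)).Reachable r₁ r₂) : r₁ = r₂ := by
  wlog hle : r₁ ≤ r₂ generalizing r₁ r₂
  · exact (this h₂ h₁ h.symm (le_of_not_ge hle)).symm
  have hlt : ∀ v, r₁ < v → v ≤ r₂ → w v = .lt := by
    intro v
    induction v using Fin.induction with
    | zero => exact fun h => absurd h (Fin.not_lt_zero _)
    | succ i ih =>
      intro hr₁ hr₂
      have hr₁' := Fin.le_castSucc_iff.mpr hr₁
      refine (edge_mem_edgesOfDir.mp
        (edge_mem_of_reachable (edgesOfDir_subset w) h hr₁' hr₂)).resolve_left fun hgt => ?_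
      rcases hr₁'.eq_or_lt with heq | hlt
      · simp [← heq, h₁] at hgt
      · simp [ih hlt (Fin.castSucc_lt_succ.le.trans hr₂)] at hgt
  by_contra hne
  simpa [h₂] using hlt r₂ (lt_of_le_of_ne hle hne) le_rfl

def ofDir (hw : IsDirectionWord w) : RootedForest (pathGraph (m + 1)) where
  edges := edgesOfDir w
  roots := {v | w v = .eq}
  edges_sub := edgesOfDir_subset w
  acyclic := isAcyclic_fromEdgeSet (edgesOfDir_subset w)
  unique_root v := by
    obtain ⟨r, hr, hvr, -⟩ := exists_root hw v
    exact ⟨r, ⟨hr, hvr⟩, fun r' ⟨hr', hvr'⟩ => eq_of_reachable hr' hr (hvr'.symm.trans hvr)⟩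

theorem dir_ofDir (hw : IsDirectionWord w) : (ofDir hw).dir = w := by
  funext v
  obtain ⟨r, hr, hvr, hcmp⟩ := exists_root hw v
  rw [RootedForest.dir, ← RootedForest.eq_root (F := ofDir hw) hr hvr, hcmp]

end Word

noncomputable def dirEquiv :
    RootedForest (pathGraph (m + 1)) ≃ {w : Fin (m + 1) → Ordering // IsDirectionWord w} where
  toFun F := ⟨F.dir, isDirectionWord_dir F⟩
  invFun w := ofDir w.2
  left_inv F := RootedForest.ext (edges_eq_edgesOfDir F).symm
    (Set.ext fun _ => RootedForest.dir_eq_eq_iff)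
  right_inv w := Subtype.ext (dir_ofDir w.2)

theorem noFacingPair_snoc {v : Fin (m + 1) → Ordering} {x : Ordering} :
    NoFacingPair (Fin.snoc v x : Fin (m + 2) → Ordering) ↔
      NoFacingPair v ∧ ¬(v (Fin.last m) = .gt ∧ x = .lt) := by
  simp only [NoFacingPair, Fin.forall_fin_succ' (n := m), Fin.succ_castSucc, Fin.snoc_castSucc,
    Fin.succ_last, Fin.snoc_last]

theorem natCard_directionWords_eq_fib (m : ℕ) :
    Nat.card {w : Fin (m + 1) → Ordering // w 0 = .eq ∧ NoFacingPair w ∧ w (Fin.last m) ≠ .gt} =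
      Nat.fib (2 * m + 1) ∧
    Nat.card {w : Fin (m + 1) → Ordering // w 0 = .eq ∧ NoFacingPair w} = Nat.fib (2 * m + 2) := by
  induction m with
  | zero =>
    simp only [NoFacingPair, Nat.card_eq_fintype_card]
    decide
  | succ m ih =>
    simp only [natCard_subtype_eq_sum_snoc (m := m + 1), sum_ordering, Fin.snoc_apply_zero,
      noFacingPair_snoc, Fin.snoc_last, ne_eq, and_true, reduceCtorEq, not_false_eq_true,
      and_false, not_true_eq_false, Nat.card_eq_fintype_card, Fintype.card_eq_zero, add_zero]
    simp only [ne_eq] at ih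
    have h₃ : Nat.fib (2 * (m + 1) + 1) = Nat.fib (2 * m + 1) + Nat.fib (2 * m + 2) :=
      Nat.fib_add_two
    have h₄ : Nat.fib (2 * (m + 1) + 2) = Nat.fib (2 * m + 2) + Nat.fib (2 * (m + 1) + 1) :=
      Nat.fib_add_two
    omega

theorem natCard_forest_rootedAt_zero (m : ℕ) :
    Nat.card {F : RootedForest (pathGraph (m + 1)) // 0 ∈ F.roots} =
      Nat.card {w : Fin (m + 1) → Ordering // w 0 = .eq ∧ NoFacingPair w ∧ w (Fin.last m) ≠ .gt} :=
  Nat.card_congr <| (dirEquiv.subtypeEquiv fun _ => RootedForest.dir_eq_eq_iff.symm).trans <|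
    (Equiv.subtypeSubtypeEquivSubtypeInter _ _).trans <| Equiv.subtypeEquivRight fun _ =>
      ⟨fun ⟨⟨_, h₁, h₂⟩, h₀⟩ => ⟨h₀, h₁, h₂⟩, fun ⟨h₀, h₁, h₂⟩ => ⟨⟨by simp [h₀], h₁, h₂⟩, h₀⟩⟩

end PathGraph

theorem path_forest_count_root_one (n : ℕ) (hn : 1 ≤ n) :
    Nat.card {F : RootedForest (SimpleGraph.pathGraph n) //
      (⟨0, by omega⟩ : Fin n) ∈ F.roots} = Nat.fib (2 * n - 1) := by
  obtain ⟨m, rfl⟩ : ∃ m, n = m + 1 := ⟨n - 1, by omega⟩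
  rw [show 2 * (m + 1) - 1 = 2 * m + 1 by omega]
  exact (PathGraph.natCard_forest_rootedAt_zero m).trans
    (PathGraph.natCard_directionWords_eq_fib m).1
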